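/- Let G = (N, Σ, R) be a first-order grammar and M_G the pushdown system (with deterministic ε-rules) obtained by the standard translation using rhs-substitutions. Then for every nonterminal A ∈ N, the state A(x1,…,x_{ar(A)}) of L_G is weakly bisimilar to the state q1 A of L_{M_G} (in the disjoint union of the two labelled transition systems, where every transition of L_G is regarded as non-silent). -/

import Mathlib

open scoped ENat

noncomputable section

namespace FOG

/-- A node label: a nonterminal or a variable (variable `x_{i+1}` has index `i`). -/
abbrev Sym (Nt : Type) := Nt ⊕ ℕ

/-- A (pre)term over the nonterminals `Nt` and the variables, given by its
(partial) labelling of tree positions; possibly infinite terms are allowed. -/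
abbrev PreTerm (Nt : Type) := List ℕ → Option (Sym Nt)

variable {Nt : Type}

/-- the term consisting of the single variable `x_{i+1}` -/
def varPre (i : ℕ) : PreTerm Nt := fun p => if p = [] then some (Sum.inr i) else none

/-- the subterm of `E` rooted at position `p` -/
def subAt (E : PreTerm Nt) (p : List ℕ) : PreTerm Nt := fun q => E (p ++ q)

/-- the positions (nodes) of a term -/
def positions (E : PreTerm Nt) : Set (List ℕ) := {p | E p ≠ none}

/-- the set of subterms of a term -/
def subterms (E : PreTerm Nt) : Set (PreTerm Nt) := {F | ∃ p, E p ≠ none ∧ F = subAt E p}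

/-- the size `|E|` of a term: its number of distinct subterms -/
def size1 (E : PreTerm Nt) : ℕ := (subterms E).ncard

/-- `|E,F|`: the number of distinct subterms of `E` and `F` together -/
def size2 (E F : PreTerm Nt) : ℕ := (subterms E ∪ subterms F).ncard

/-- the set of (indices of) variables occurring in a term -/
def varsOf (E : PreTerm Nt) : Set ℕ := {i | ∃ p, E p = some (Sum.inr i)}

/-- `vars(E,F)` -/
def vars2 (E F : PreTerm Nt) : Set ℕ := varsOf E ∪ varsOf F

/-- the number of distinct subterms of `E` whose root label is a nonterminal -/
def ntcount (E : PreTerm Nt) : ℕ :=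
  {F | F ∈ subterms E ∧ ∃ A : Nt, F [] = some (Sum.inl A)}.ncard

/-- the height of a (finite) term -/
def heightP (E : PreTerm Nt) : ℕ := sSup {n | ∃ p ∈ positions E, p.length = n}

/-- Well-formedness: the root is labelled, and a child position `p ++ [i]` is
labelled iff `p` carries a nonterminal of arity `> i`; variables are leaves. -/
def IsTerm (ar : Nt → ℕ) (E : PreTerm Nt) : Prop :=
  E [] ≠ none ∧ ∀ p i, (E (p ++ [i]) ≠ none ↔ ∃ A, E p = some (Sum.inl A) ∧ i < ar A)

/-- a regular term: a term with finitely many distinct subterms -/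
def IsRegTerm (ar : Nt → ℕ) (E : PreTerm Nt) : Prop := IsTerm ar E ∧ (subterms E).Finite

/-- a finite term -/
def IsFinTerm (ar : Nt → ℕ) (E : PreTerm Nt) : Prop := IsTerm ar E ∧ (positions E).Finite

/-- does an (optional) label carry a variable? -/
def isVarLabel : Option (Sym Nt) → Bool
  | some (Sum.inr _) => true
  | _ => false

/-- The term `Eσ` obtained by applying the substitution `σ` to `E`:  at a position
`p = p₁ ++ p₂` where `p₁` is the (unique, if any) prefix of `p` at which `E` carries
a variable `x`, the label is that of `σ(x)` at `p₂`; elsewhere it is that of `E`. -/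
def substPre (E : PreTerm Nt) (σ : ℕ → PreTerm Nt) : PreTerm Nt := fun p =>
  match (List.range (p.length + 1)).find? (fun k => isVarLabel (E (p.take k))) with
  | some k =>
    match E (p.take k) with
    | some (Sum.inr i) => σ i (p.drop k)
    | _ => none
  | none => E p

/-- the term `A(x_1,…,x_k)σ`, whose root is `A` and whose `j`-th child is `σ(x_{j+1})` -/
def headTerm (A : Nt) (k : ℕ) (σ : ℕ → PreTerm Nt) : PreTerm Nt := fun p =>
  match p with
  | [] => some (Sum.inl A)
  | j :: p' => if j < k then σ j p' else none

/-- a rule `A(x_1,…,x_{ar(A)}) →_a E` of a first-order grammar -/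
structure GRule (Nt Act : Type) where
  lhsA : Nt
  act : Act
  rhs : PreTerm Nt

/-- a first-order grammar `G = (N, Σ, R)` -/
structure Grammar where
  Nt : Type
  Act : Type
  ar : Nt → ℕ
  rules : Set (GRule Nt Act)

/-- Well-formedness of a first-order grammar: the ranked alphabet `N` and the action
alphabet `Σ` are finite, there are finitely many rules, and each right-hand side is a
finite term all of whose variables are among `x_1, …, x_{ar(A)}` for the
left-hand-side nonterminal `A`. -/
def Grammar.WF (G : Grammar) : Prop :=
  Finite G.Nt ∧ Finite G.Act ∧ G.rules.Finite ∧
    ∀ r ∈ G.rules, IsFinTerm G.ar r.rhs ∧ varsOf r.rhs ⊆ {i | i < G.ar r.lhsA}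

/-- The transition relation of the labelled transition system `L_G`: each rule
`A(x_1,…,x_{ar(A)}) →_a E` induces `A(x_1,…,x_{ar(A)})σ →_a Eσ` for every
substitution `σ`. -/
def gstepP (G : Grammar) (a : G.Act) (E F : PreTerm G.Nt) : Prop :=
  ∃ r ∈ G.rules, r.act = a ∧
    ∃ σ : ℕ → PreTerm G.Nt, E = headTerm r.lhsA (G.ar r.lhsA) σ ∧ F = substPre r.rhs σ

/-- The transition relation of `L_G` augmented with a self-loop `x →_{a_x} x` with
a fresh action `a_x` for every variable `x` (so that `el(x,E) = 0` for `E ≠ x`). -/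
def gstepA (G : Grammar) : G.Act ⊕ ℕ → PreTerm G.Nt → PreTerm G.Nt → Prop
  | Sum.inl a => gstepP G a
  | Sum.inr i => fun E F => E = varPre i ∧ F = varPre i

section LTS

variable {Act S : Type*}

/-- `R` is a (strong) bisimulation for the transition relation `tr` -/
def IsBisim (tr : Act → S → S → Prop) (R : S → S → Prop) : Prop :=
  ∀ s t, R s t →
    (∀ a s', tr a s s' → ∃ t', tr a t t' ∧ R s' t') ∧
    (∀ a t', tr a t t' → ∃ s', tr a s s' ∧ R s' t')

/-- bisimilarity: the largest bisimulation -/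
def Bisim (tr : Act → S → S → Prop) (s t : S) : Prop := ∃ R, IsBisim tr R ∧ R s t

/-- the approximants `∼_k` of bisimilarity -/
def approx (tr : Act → S → S → Prop) : ℕ → S → S → Prop
  | 0 => fun _ _ => True
  | k + 1 => fun s t => approx tr k s t ∧
      (∀ a s', tr a s s' → ∃ t', tr a t t' ∧ approx tr k s' t') ∧
      (∀ a t', tr a t t' → ∃ s', tr a s s' ∧ approx tr k s' t')

/-- the equivalence level `el(s,t) = sup {k ∈ ℕ | s ∼_k t} ∈ ℕ ∪ {ω}` -/
def elev (tr : Act → S → S → Prop) (s t : S) : ℕ∞ :=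
  sSup {e : ℕ∞ | ∃ k : ℕ, approx tr k s t ∧ e = (k : ℕ∞)}

end LTS

/-- the size `|G|` of a grammar -/
def gsize (G : Grammar) : ℕ := ∑ᶠ r ∈ G.rules, (G.ar r.lhsA + 1 + size1 r.rhs)

/-- `m`: the maximal arity of a nonterminal -/
def maxAr (G : Grammar) : ℕ := sSup (Set.range G.ar)

/-- `hinc`: the maximal height increase in one transition step -/
def hinc (G : Grammar) : ℕ := sSup {k | ∃ r ∈ G.rules, k = heightP r.rhs - 1}

/-- `sinc`: the maximal size increase in one transition step -/
def sinc (G : Grammar) : ℕ := sSup {k | ∃ r ∈ G.rules, k = ntcount r.rhs}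

end FOG

namespace PDS

/-- a transition rule `pY →_a qγ` of a pushdown system (`a = none` means `ε`) -/
structure PRule (Q Act Γ : Type) where
  p : Q
  Y : Γ
  a : Option Act
  q : Q
  out : List Γ

/-- The transition relation of the LTS `L_M` generated by a pushdown system with
rule set `Δ`: each rule `pY →_a qγ` induces `pYγ' →_a qγγ'` for all `γ' ∈ Γ*`. -/
def pstep {Q Act Γ : Type} (Δ : Set (PRule Q Act Γ)) :
    Option Act → Q × List Γ → Q × List Γ → Prop := fun a s t =>
  ∃ r ∈ Δ, r.a = a ∧ ∃ γ' : List Γ, s = (r.p, r.Y :: γ') ∧ t = (r.q, r.out ++ γ')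

section Weak

variable {A S T : Type*}

/-- `s ⇒_a t` (for `a = ε` an arbitrary sequence of silent steps, for `a ∈ Σ` a
visible step surrounded by silent steps) -/
def wstep (tr : Option A → S → S → Prop) : Option A → S → S → Prop
  | none => Relation.ReflTransGen (tr none)
  | some a => fun s t => ∃ u v, Relation.ReflTransGen (tr none) s u ∧
      tr (some a) u v ∧ Relation.ReflTransGen (tr none) v t

/-- `R` is a weak bisimulation -/
def IsWeakBisim (tr : Option A → S → S → Prop) (R : S → S → Prop) : Prop :=
  ∀ s t, R s t →
    (∀ a s', tr a s s' → ∃ t', wstep tr a t t' ∧ R s' t') ∧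
    (∀ a t', tr a t t' → ∃ s', wstep tr a s s' ∧ R s' t')

/-- weak bisimilarity `≈`: the largest weak bisimulation -/
def WeakBisim (tr : Option A → S → S → Prop) (s t : S) : Prop :=
  ∃ R, IsWeakBisim tr R ∧ R s t

/-- the disjoint union of two labelled transition systems -/
def sumStep (t1 : A → S → S → Prop) (t2 : A → T → T → Prop) :
    A → S ⊕ T → S ⊕ T → Prop
  | a, Sum.inl s, Sum.inl s' => t1 a s s'
  | a, Sum.inr t, Sum.inr t' => t2 a t t'
  | _, _, _ => False

/-- regard an LTS without silent actions as one with (unused) silent actions -/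
def liftTr (tr : A → S → S → Prop) : Option A → S → S → Prop
  | none => fun _ _ => False
  | some a => tr a

end Weak

end PDS

namespace G2PDS

open FOG PDS

/-- the root-substitution of a term with root arity `k`:
`σ(x_{j+1})` is the `j`-th child for `j < k`, and `σ(x) = x` otherwise -/
def rootSubst {Nt : Type} (E : PreTerm Nt) (k : ℕ) : ℕ → PreTerm Nt :=
  fun j => if j < k then subAt E [j] else varPre j

/-- `RSubs_G`: the rhs-substitutions for `G`, i.e. the root-substitutions of the
non-variable subterms of right-hand sides of rules of `G` -/
def RSubsSet (G : FOG.Grammar) : Set (ℕ → PreTerm G.Nt) :=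
  {σ | ∃ r ∈ G.rules, ∃ (p : List ℕ) (A : G.Nt),
    r.rhs p = some (Sum.inl A) ∧ σ = rootSubst (subAt r.rhs p) (G.ar A)}

/-- the number of control states: `m = max_{A ∈ N} ar(A)`, or `1` if `m = 0` -/
def mQ (G : FOG.Grammar) : ℕ := max (maxAr G) 1

/-- the stack alphabet `Γ = N ⊎ RSubs_G` -/
def ΓM (G : FOG.Grammar) : Type := G.Nt ⊕ {σ : ℕ → PreTerm G.Nt // σ ∈ RSubsSet G}

/-- the control state `q₁` -/
def q1 (G : FOG.Grammar) : Fin (mQ G) :=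
  ⟨0, lt_of_lt_of_le one_pos (le_max_right (maxAr G) 1)⟩

/-- The rules of the pushdown system `M_G`:
`q₁A →_a q_i` for each rule `A(x₁,…) →_a x_i`;
`q₁A →_a q₁Bσ` for each `σ ∈ RSubs_G` and rule `A(x₁,…) →_a B(x₁,…)σ`;
`q_iσ →_ε q_j` whenever `σ(x_i) = x_j`; and
`q_iσ →_ε q₁Cσ'` whenever `σ(x_i) = C(x₁,…)σ'` with `σ' ∈ RSubs_G`. -/
def ΔM (G : FOG.Grammar) : Set (PRule (Fin (mQ G)) G.Act (ΓM G)) :=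
  {pr |
    (∃ r ∈ G.rules, ∃ (i : ℕ) (hi : i < mQ G),
      r.rhs = varPre i ∧
      pr = ⟨q1 G, Sum.inl r.lhsA, some r.act, ⟨i, hi⟩, []⟩) ∨
    (∃ r ∈ G.rules, ∃ B : G.Nt,
      r.rhs [] = some (Sum.inl B) ∧
      ∃ hσ : rootSubst r.rhs (G.ar B) ∈ RSubsSet G,
      pr = ⟨q1 G, Sum.inl r.lhsA, some r.act, q1 G,
            [Sum.inl B, Sum.inr ⟨rootSubst r.rhs (G.ar B), hσ⟩]⟩) ∨
    (∃ (i : Fin (mQ G)) (σ : {σ : ℕ → PreTerm G.Nt // σ ∈ RSubsSet G})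
       (j : ℕ) (hj : j < mQ G),
      σ.val i.val = varPre j ∧
      pr = ⟨i, Sum.inr σ, none, ⟨j, hj⟩, []⟩) ∨
    (∃ (i : Fin (mQ G)) (σ : {σ : ℕ → PreTerm G.Nt // σ ∈ RSubsSet G}) (C : G.Nt),
      (σ.val i.val) [] = some (Sum.inl C) ∧
      ∃ hσ' : rootSubst (σ.val i.val) (G.ar C) ∈ RSubsSet G,
      pr = ⟨i, Sum.inr σ, none, q1 G,
            [Sum.inl C, Sum.inr ⟨rootSubst (σ.val i.val) (G.ar C), hσ'⟩]⟩)}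

end G2PDS

/-!
A configuration `(q, γ)` of `M_G` denotes a term: the stack is read as a composition of
substitutions applied to `x_q`, a nonterminal `A` on top standing for `A(x₁,…,x_{ar(A)})`.
The `ε`-rules only unfold the substitution on top of the stack, so they preserve the denoted
term, and they always lead to a configuration with the root nonterminal of that term on top and
control state `q₁`; there the visible rules of `M_G` are exactly the rules of `G`.  Hence
"`E` is denoted by the configuration" is a weak bisimulation, provided configurations are
restricted to the shapes reachable from `q₁A`: a nonterminal occurs at most on top of the
stack, and then only in state `q₁`.
-/

namespace FOG

variable {Nt : Type}

theorem subAt_subAt (E : PreTerm Nt) (p q : List ℕ) :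
    subAt (subAt E p) q = subAt E (p ++ q) := by
  funext r
  simp [subAt, List.append_assoc]

theorem IsTerm.subAt {ar : Nt → ℕ} {E : PreTerm Nt} (hE : IsTerm ar E) {p : List ℕ}
    (hp : E p ≠ none) : IsTerm ar (subAt E p) :=
  ⟨by simpa [FOG.subAt] using hp,
    fun q i => by simpa [FOG.subAt, List.append_assoc] using hE.2 (p ++ q) i⟩

theorem isTerm_varPre (ar : Nt → ℕ) (i : ℕ) : IsTerm ar (varPre (Nt := Nt) i) := by
  refine ⟨by simp [varPre], fun p j => ⟨fun hp => absurd (by simp [varPre]) hp, ?_⟩⟩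
  rintro ⟨A, hA, -⟩
  simp only [varPre] at hA
  split at hA <;> simp_all

theorem IsTerm.eq_none_of_not_child {ar : Nt → ℕ} {E : PreTerm Nt} (hE : IsTerm ar E) {j : ℕ}
    (h : ¬ ∃ A, E [] = some (Sum.inl A) ∧ j < ar A) (q : List ℕ) : E (j :: q) = none := by
  induction q using List.reverseRecOn with
  | nil =>
    by_contra hne
    exact h (by simpa using (hE.2 [] j).1 (by simpa using hne))
  | append_singleton q i ih =>
    by_contra hne
    simpa [ih] using (hE.2 (j :: q) i).1 (by simpa using hne)

theorem IsTerm.eq_varPre {ar : Nt → ℕ} {E : PreTerm Nt} (hE : IsTerm ar E) {i : ℕ}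
    (h : E [] = some (Sum.inr i)) : E = varPre i := by
  funext p
  cases p with
  | nil => simp [varPre, h]
  | cons j q => simp [hE.eq_none_of_not_child (by simp [h]) q, varPre]

theorem substPre_nil_of_not_var {E : PreTerm Nt} (h : isVarLabel (E []) = false)
    (τ : ℕ → PreTerm Nt) : substPre E τ [] = E [] := by
  simp [substPre, List.range_succ, List.find?, h]

theorem substPre_of_root_var {E : PreTerm Nt} {i : ℕ} (h : E [] = some (Sum.inr i))
    (τ : ℕ → PreTerm Nt) : substPre E τ = τ i := by
  funext p
  have h0 : isVarLabel (E (p.take 0)) = true := by simp [h, isVarLabel]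
  simp only [substPre]
  rw [List.range_succ_eq_map, List.find?_cons_of_pos (by simpa using h0)]
  simp [h]

theorem substPre_varPre (i : ℕ) (τ : ℕ → PreTerm Nt) : substPre (varPre i) τ = τ i :=
  substPre_of_root_var (by simp [varPre]) τ

theorem substPre_cons {E : PreTerm Nt} (h : isVarLabel (E []) = false) (τ : ℕ → PreTerm Nt)
    (j : ℕ) (p : List ℕ) : substPre E τ (j :: p) = substPre (subAt E [j]) τ p := by
  simp only [substPre, List.length_cons]
  rw [List.range_succ_eq_map, List.find?_cons_of_neg (by simpa using h), List.find?_map]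
  have hshift : ((fun k => isVarLabel (E ((j :: p).take k))) ∘ Nat.succ)
      = fun k => isVarLabel (subAt E [j] (p.take k)) := by
    funext k
    simp [subAt, List.take_succ_cons]
  rw [hshift]
  cases (List.range (p.length + 1)).find? (fun k => isVarLabel (subAt E [j] (p.take k))) with
  | none => simp [subAt]
  | some k =>
    have hE : E ((j :: p).take (k + 1)) = subAt E [j] (p.take k) := by
      simp [subAt, List.take_succ_cons]
    simp only [Option.map_some, hE]
    rcases subAt E [j] (p.take k) with _ | _ | _ <;> simp [List.drop_succ_cons]

theorem substPre_eq_none {E : PreTerm Nt} (h : ∀ p, E p = none) (τ : ℕ → PreTerm Nt)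
    (p : List ℕ) : substPre E τ p = none := by
  simp only [substPre]
  rw [List.find?_eq_none.2 (by simp [h, isVarLabel])]
  exact h p

theorem substPre_congr {E : PreTerm Nt} {σ σ' : ℕ → PreTerm Nt}
    (h : ∀ i ∈ varsOf E, σ i = σ' i) : substPre E σ = substPre E σ' := by
  funext p
  simp only [substPre]
  cases (List.range (p.length + 1)).find? (fun k => isVarLabel (E (p.take k))) with
  | none => rfl
  | some k =>
    rcases hE : E (p.take k) with _ | _ | i
    · simp [hE]
    · simp [hE]
    · simp [hE, h i ⟨p.take k, hE⟩]

theorem headTerm_cons_of_lt (A : Nt) {k j : ℕ} (σ : ℕ → PreTerm Nt) (h : j < k)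
    (p : List ℕ) : headTerm A k σ (j :: p) = σ j p := by
  simp [headTerm, h]

theorem Grammar.WF.isTerm_rhs {G : Grammar} (hG : G.WF) {r : GRule G.Nt G.Act}
    (hr : r ∈ G.rules) : IsTerm G.ar r.rhs :=
  (hG.2.2.2 r hr).1.1

theorem Grammar.WF.lt_ar_of_mem_varsOf_rhs {G : Grammar} (hG : G.WF) {r : GRule G.Nt G.Act}
    (hr : r ∈ G.rules) {i : ℕ} (hi : i ∈ varsOf r.rhs) : i < G.ar r.lhsA :=
  (hG.2.2.2 r hr).2 hi

end FOG

namespace PDS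

variable {A S T : Type*} {t₁ : Option A → S → S → Prop} {t₂ : Option A → T → T → Prop}

theorem wstep.lift {tr : Option A → S → S → Prop} {tr' : Option A → T → T → Prop} (f : S → T)
    (hf : ∀ a x y, tr a x y → tr' a (f x) (f y)) {a : Option A} {s s' : S}
    (h : wstep tr a s s') : wstep tr' a (f s) (f s') := by
  have lift {x y : S} (hxy : Relation.ReflTransGen (tr none) x y) :
      Relation.ReflTransGen (tr' none) (f x) (f y) :=
    hxy.lift f (hf none)
  cases a with
  | none => exact lift h
  | some a =>
    obtain ⟨u, v, hsu, huv, hvs⟩ := h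
    exact ⟨f u, f v, lift hsu, hf _ _ _ huv, lift hvs⟩

theorem isWeakBisim_sumStep {R : S → T → Prop}
    (h₁ : ∀ s t, R s t → ∀ a s', t₁ a s s' → ∃ t', wstep t₂ a t t' ∧ R s' t')
    (h₂ : ∀ s t, R s t → ∀ a t', t₂ a t t' → ∃ s', wstep t₁ a s s' ∧ R s' t') :
    IsWeakBisim (sumStep t₁ t₂) fun x y => ∃ s t, R s t ∧ x = Sum.inl s ∧ y = Sum.inr t := by
  rintro _ _ ⟨s, t, hst, rfl, rfl⟩
  constructor
  · rintro a (s' | t') h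
    · obtain ⟨t', ht, hR⟩ := h₁ s t hst a s' h
      exact ⟨Sum.inr t', ht.lift Sum.inr fun _ _ _ h => h, s', t', hR, rfl, rfl⟩
    · exact h.elim
  · rintro a (s' | t') h
    · exact h.elim
    · obtain ⟨s', hs, hR⟩ := h₂ s t hst a t' h
      exact ⟨Sum.inl s', hs.lift Sum.inl fun _ _ _ h => h, s', t', hR, rfl, rfl⟩

end PDS

namespace G2PDS

open FOG PDS

section Terms

variable {Nt : Type}

theorem rootSubst_of_lt (E : PreTerm Nt) {k i : ℕ} (h : i < k) :
    rootSubst E k i = subAt E [i] :=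
  if_pos h

theorem rootSubst_of_not_lt (E : PreTerm Nt) {k i : ℕ} (h : ¬ i < k) :
    rootSubst E k i = varPre i :=
  if_neg h

theorem _root_.FOG.IsTerm.substPre_eq_headTerm {ar : Nt → ℕ} {E : PreTerm Nt}
    (hE : IsTerm ar E) {B : Nt} (h : E [] = some (Sum.inl B)) (τ : ℕ → PreTerm Nt) :
    substPre E τ = headTerm B (ar B) fun j => substPre (rootSubst E (ar B) j) τ := by
  have hnv : isVarLabel (E []) = false := by simp [h, isVarLabel]
  funext p
  cases p with
  | nil => simp [substPre_nil_of_not_var hnv, headTerm, h]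
  | cons j q =>
    rw [substPre_cons hnv]
    by_cases hj : j < ar B
    · simp [headTerm, hj, rootSubst]
    · have hnone : ∀ r, subAt E [j] r = none := fun r =>
        hE.eq_none_of_not_child (by simp [h, hj]) r
      simp [substPre_eq_none hnone, headTerm, hj]

end Terms

variable {G : Grammar}

abbrev RSubs (G : Grammar) := {σ : ℕ → PreTerm G.Nt // σ ∈ RSubsSet G}

theorem ar_le_mQ (hG : G.WF) (A : G.Nt) : G.ar A ≤ mQ G := by
  have : Finite G.Nt := hG.1
  exact (le_csSup (Set.finite_range G.ar).bddAbove ⟨A, rfl⟩).trans (le_max_left _ _)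

theorem isTerm_of_mem_RSubsSet (hG : G.WF) {σ : ℕ → PreTerm G.Nt} (hσ : σ ∈ RSubsSet G)
    (i : ℕ) : IsTerm G.ar (σ i) := by
  obtain ⟨r, hr, p, A, hpA, rfl⟩ := hσ
  have hterm := hG.isTerm_rhs hr
  by_cases hi : i < G.ar A
  · rw [rootSubst_of_lt _ hi, subAt_subAt]
    exact hterm.subAt ((hterm.2 p i).2 ⟨A, hpA, hi⟩)
  · rw [rootSubst_of_not_lt _ hi]
    exact isTerm_varPre _ _

theorem lt_mQ_of_mem_RSubsSet (hG : G.WF) {σ : ℕ → PreTerm G.Nt} (hσ : σ ∈ RSubsSet G)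
    {i j : ℕ} (hi : i < mQ G) (h : σ i [] = some (Sum.inr j)) : j < mQ G := by
  obtain ⟨r, hr, p, A, hpA, rfl⟩ := hσ
  by_cases hlt : i < G.ar A
  · rw [rootSubst_of_lt _ hlt, subAt_subAt] at h
    exact (hG.lt_ar_of_mem_varsOf_rhs hr ⟨p ++ [i] ++ [], h⟩).trans_le (ar_le_mQ hG _)
  · rw [rootSubst_of_not_lt _ hlt] at h
    simp only [varPre, if_pos, Option.some.injEq, Sum.inr.injEq] at h
    exact h ▸ hi

theorem rootSubst_mem_RSubsSet {σ : ℕ → PreTerm G.Nt} (hσ : σ ∈ RSubsSet G) {i : ℕ}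
    {C : G.Nt} (h : σ i [] = some (Sum.inl C)) : rootSubst (σ i) (G.ar C) ∈ RSubsSet G := by
  obtain ⟨r, hr, p, A, hpA, rfl⟩ := hσ
  by_cases hlt : i < G.ar A
  · rw [rootSubst_of_lt _ hlt, subAt_subAt] at h ⊢
    exact ⟨r, hr, p ++ [i], C, by simpa [subAt] using h, rfl⟩
  · rw [rootSubst_of_not_lt _ hlt] at h
    simp [varPre] at h

/-- The term denoted by the configuration `(q, γ)`, as a function of the control state `q`. -/
def stackTerm (G : Grammar) : List (ΓM G) → ℕ → PreTerm G.Nt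
  | [], q => varPre q
  | Sum.inl A :: γ, _ => headTerm A (G.ar A) (stackTerm G γ)
  | Sum.inr σ :: γ, q => substPre (σ.val q) (stackTerm G γ)

theorem stackTerm_pop {σ : RSubs G} {γ : List (ΓM G)} {q j : ℕ} (h : σ.val q = varPre j) :
    stackTerm G (Sum.inr σ :: γ) q = stackTerm G γ j :=
  (congrArg (substPre · _) h).trans (substPre_varPre j _)

theorem substPre_stackTerm_eq_push {E : PreTerm G.Nt} (hE : IsTerm G.ar E) {C : G.Nt}
    (hC : E [] = some (Sum.inl C)) (hmem : rootSubst E (G.ar C) ∈ RSubsSet G)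
    (γ : List (ΓM G)) :
    substPre E (stackTerm G γ) = stackTerm G (Sum.inl C :: Sum.inr ⟨_, hmem⟩ :: γ) 0 :=
  hE.substPre_eq_headTerm hC _

theorem stackTerm_push (hG : G.WF) {σ : RSubs G} {γ : List (ΓM G)} {q : ℕ} {C : G.Nt}
    (h : σ.val q [] = some (Sum.inl C)) :
    stackTerm G (Sum.inr σ :: γ) q =
      stackTerm G (Sum.inl C :: Sum.inr ⟨_, rootSubst_mem_RSubsSet σ.2 h⟩ :: γ) 0 :=
  substPre_stackTerm_eq_push (isTerm_of_mem_RSubsSet hG σ.2 q) h _ γ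

theorem pstep_pop {q : Fin (mQ G)} {σ : RSubs G} {γ : List (ΓM G)} {j : ℕ} (hj : j < mQ G)
    (h : σ.val q = varPre j) : pstep (ΔM G) none (q, Sum.inr σ :: γ) (⟨j, hj⟩, γ) :=
  ⟨_, Or.inr (Or.inr (Or.inl ⟨q, σ, j, hj, h, rfl⟩)), rfl, γ, rfl, rfl⟩

theorem pstep_push {q : Fin (mQ G)} {σ : RSubs G} {γ : List (ΓM G)} {C : G.Nt}
    (h : σ.val q [] = some (Sum.inl C)) :
    pstep (ΔM G) none (q, Sum.inr σ :: γ)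
      (q1 G, Sum.inl C :: Sum.inr ⟨_, rootSubst_mem_RSubsSet σ.2 h⟩ :: γ) :=
  ⟨_, Or.inr (Or.inr (Or.inr ⟨q, σ, C, h, rootSubst_mem_RSubsSet σ.2 h, rfl⟩)), rfl, γ, rfl, rfl⟩

theorem pstep_of_rhs_eq_varPre {r : GRule G.Nt G.Act} (hr : r ∈ G.rules) {i : ℕ}
    (hi : i < mQ G) (h : r.rhs = varPre i) (γ : List (ΓM G)) :
    pstep (ΔM G) (some r.act) (q1 G, Sum.inl r.lhsA :: γ) (⟨i, hi⟩, γ) :=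
  ⟨_, Or.inl ⟨r, hr, i, hi, h, rfl⟩, rfl, γ, rfl, rfl⟩

theorem pstep_of_rhs_root_nt {r : GRule G.Nt G.Act} (hr : r ∈ G.rules) {B : G.Nt}
    (hB : r.rhs [] = some (Sum.inl B)) (γ : List (ΓM G)) :
    pstep (ΔM G) (some r.act) (q1 G, Sum.inl r.lhsA :: γ)
      (q1 G, Sum.inl B :: Sum.inr ⟨rootSubst r.rhs (G.ar B), ⟨r, hr, [], B, hB, rfl⟩⟩ :: γ) :=
  ⟨_, Or.inr (Or.inl ⟨r, hr, B, hB, ⟨r, hr, [], B, hB, rfl⟩, rfl⟩), rfl, γ, rfl, rfl⟩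

/-- An invariant of the configurations reachable from `(q₁, [A])`. -/
inductive WellShaped (G : Grammar) : Fin (mQ G) → List (ΓM G) → Prop
  | subst {q : Fin (mQ G)} {γ : List (ΓM G)} : (∀ x ∈ γ, x.isRight) → WellShaped G q γ
  | head (A : G.Nt) {γ : List (ΓM G)} : (∀ x ∈ γ, x.isRight) → WellShaped G (q1 G) (Sum.inl A :: γ)

theorem WellShaped.tail {q : Fin (mQ G)} {x : ΓM G} {γ : List (ΓM G)}
    (hw : WellShaped G q (x :: γ)) : ∀ y ∈ γ, y.isRight := by
  cases hw with
  | subst h => exact fun y hy => h y (List.mem_cons_of_mem x hy)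
  | head _ h => exact h

theorem exists_silent_path_to_head_of_isRight (hG : G.WF) {γ : List (ΓM G)}
    (hγ : ∀ x ∈ γ, x.isRight) {q : Fin (mQ G)} {A : G.Nt}
    (hA : stackTerm G γ q [] = some (Sum.inl A)) :
    ∃ γ', (∀ x ∈ γ', x.isRight) ∧
      Relation.ReflTransGen (pstep (ΔM G) none) (q, γ) (q1 G, Sum.inl A :: γ') ∧
      stackTerm G γ q = stackTerm G (Sum.inl A :: γ') 0 := by
  induction γ generalizing q with
  | nil => simp [stackTerm, varPre] at hA
  | cons x γ ih =>
    obtain ⟨σ, rfl⟩ := Sum.isRight_iff.mp (hγ x List.mem_cons_self)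
    have hγ' : ∀ y ∈ γ, y.isRight := fun y hy => hγ y (List.mem_cons_of_mem _ hy)
    have hterm := isTerm_of_mem_RSubsSet hG σ.2 q
    rcases hroot : σ.val q [] with _ | C | j
    · exact absurd hroot hterm.1
    · have heq := stackTerm_push hG hroot (γ := γ)
      obtain rfl : C = A := by
        rw [heq] at hA
        simpa [stackTerm, headTerm] using hA
      exact ⟨_, List.forall_mem_cons.2 ⟨rfl, hγ'⟩, .single (pstep_push hroot), heq⟩
    · have hvar := hterm.eq_varPre hroot
      have hj := lt_mQ_of_mem_RSubsSet hG σ.2 q.2 hroot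
      rw [stackTerm_pop hvar] at hA ⊢
      obtain ⟨γ', hγ'', hpath, heq⟩ := ih hγ' (q := ⟨j, hj⟩) hA
      exact ⟨γ', hγ'', .head (pstep_pop hj hvar) hpath, heq⟩

theorem WellShaped.exists_silent_path_to_head (hG : G.WF) {q : Fin (mQ G)} {γ : List (ΓM G)}
    (hw : WellShaped G q γ) {A : G.Nt} (hA : stackTerm G γ q [] = some (Sum.inl A)) :
    ∃ γ', (∀ x ∈ γ', x.isRight) ∧
      Relation.ReflTransGen (pstep (ΔM G) none) (q, γ) (q1 G, Sum.inl A :: γ') ∧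
      stackTerm G γ q = stackTerm G (Sum.inl A :: γ') 0 := by
  cases hw with
  | subst hγ => exact exists_silent_path_to_head_of_isRight hG hγ hA
  | head B hγ =>
    obtain rfl : B = A := by simpa [stackTerm, headTerm] using hA
    exact ⟨_, hγ, .refl, rfl⟩

theorem WellShaped.exists_of_gstepP (hG : G.WF) {q : Fin (mQ G)} {γ : List (ΓM G)}
    (hw : WellShaped G q γ) {a : G.Act} {E' : PreTerm G.Nt}
    (h : gstepP G a (stackTerm G γ q) E') :
    ∃ q' γ', wstep (pstep (ΔM G)) (some a) (q, γ) (q', γ') ∧ WellShaped G q' γ' ∧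
      E' = stackTerm G γ' q' := by
  obtain ⟨r, hr, rfl, σ, hE, rfl⟩ := h
  obtain ⟨γ', hγ', hpath, heq⟩ :=
    hw.exists_silent_path_to_head hG (A := r.lhsA) (by rw [hE]; rfl)
  have hσ : substPre r.rhs σ = substPre r.rhs (stackTerm G γ') := by
    refine substPre_congr fun i hi => funext fun p => ?_
    have hlt := hG.lt_ar_of_mem_varsOf_rhs hr hi
    have := congrFun (hE.symm.trans heq) (i :: p)
    rwa [stackTerm, headTerm_cons_of_lt _ _ hlt, headTerm_cons_of_lt _ _ hlt] at this
  have hterm := hG.isTerm_rhs hr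
  rcases hroot : r.rhs [] with _ | B | i
  · exact absurd hroot hterm.1
  · refine ⟨_, _, ⟨_, _, hpath, pstep_of_rhs_root_nt hr hroot γ', .refl⟩,
      .head B (List.forall_mem_cons.2 ⟨rfl, hγ'⟩), ?_⟩
    exact hσ.trans (substPre_stackTerm_eq_push hterm hroot _ γ')
  · have hi := (hG.lt_ar_of_mem_varsOf_rhs hr ⟨[], hroot⟩).trans_le (ar_le_mQ hG _)
    have hvar := hterm.eq_varPre hroot
    refine ⟨_, _, ⟨_, _, hpath, pstep_of_rhs_eq_varPre hr hi hvar γ', .refl⟩, .subst hγ', ?_⟩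
    rw [hσ, hvar, substPre_varPre]

theorem WellShaped.silent_step (hG : G.WF) {q q' : Fin (mQ G)} {γ γ' : List (ΓM G)}
    (hw : WellShaped G q γ) (h : pstep (ΔM G) none (q, γ) (q', γ')) :
    WellShaped G q' γ' ∧ stackTerm G γ q = stackTerm G γ' q' := by
  obtain ⟨pr, hpr, hact, γ₀, hsrc, htgt⟩ := h
  rcases hpr with ⟨_, _, _, _, _, rfl⟩ | ⟨_, _, _, _, _, rfl⟩ | ⟨i, σ, j, hj, hvar, rfl⟩ |
    ⟨i, σ, C, hC, _, rfl⟩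
  · cases hact
  · cases hact
  · cases hsrc
    cases htgt
    exact ⟨.subst hw.tail, stackTerm_pop hvar⟩
  · cases hsrc
    cases htgt
    exact ⟨.head C (List.forall_mem_cons.2 ⟨rfl, hw.tail⟩), stackTerm_push hG hC⟩

theorem WellShaped.visible_step (hG : G.WF) {q q' : Fin (mQ G)} {γ γ' : List (ΓM G)}
    (hw : WellShaped G q γ) {a : G.Act} (h : pstep (ΔM G) (some a) (q, γ) (q', γ')) :
    WellShaped G q' γ' ∧ gstepP G a (stackTerm G γ q) (stackTerm G γ' q') := by
  obtain ⟨pr, hpr, hact, γ₀, hsrc, htgt⟩ := h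
  rcases hpr with ⟨r, hr, i, hi, hvar, rfl⟩ | ⟨r, hr, B, hB, hmem, rfl⟩ | ⟨_, _, _, _, _, rfl⟩ |
    ⟨_, _, _, _, _, rfl⟩
  · simp only [Option.some.injEq] at hact
    cases hsrc
    cases htgt
    refine ⟨.subst hw.tail, r, hr, hact, stackTerm G γ₀, rfl, ?_⟩
    rw [hvar, substPre_varPre]
    rfl
  · simp only [Option.some.injEq] at hact
    cases hsrc
    cases htgt
    exact ⟨.head B (List.forall_mem_cons.2 ⟨rfl, hw.tail⟩), r, hr, hact, stackTerm G γ₀, rfl,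
      (substPre_stackTerm_eq_push (hG.isTerm_rhs hr) hB hmem γ₀).symm⟩
  · cases hact
  · cases hact

end G2PDS

open FOG PDS G2PDS in
/-- Let `G = (N,Σ,R)` be a first-order grammar and `M_G` the
pushdown system (whose `ε`-rules are deterministic) obtained by the standard
translation using rhs-substitutions.  Then for every nonterminal `A ∈ N` the state
`A(x₁,…,x_{ar(A)})` of `L_G` is weakly bisimilar to the state `q₁A` of `L_{M_G}`,
in the disjoint union of the two labelled transition systems (where every
transition of `L_G` is regarded as non-silent). -/
theorem grammar_to_pds_correct (G : FOG.Grammar) (hG : G.WF) (A : G.Nt) :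
    WeakBisim (sumStep (liftTr (gstepP G)) (pstep (ΔM G)))
      (Sum.inl (headTerm A (G.ar A) varPre))
      (Sum.inr (q1 G, [Sum.inl A])) := by
  refine ⟨_, isWeakBisim_sumStep
    (R := fun E c => WellShaped G c.1 c.2 ∧ E = stackTerm G c.2 c.1) ?_ ?_,
    _, _, ⟨.head A (by simp), rfl⟩, rfl, rfl⟩
  · rintro _ ⟨q, γ⟩ ⟨hw, rfl⟩ (_ | a) E' h
    · exact h.elim
    · obtain ⟨q', γ', hstep, hw', rfl⟩ := hw.exists_of_gstepP hG h
      exact ⟨(q', γ'), hstep, hw', rfl⟩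
  · rintro _ ⟨q, γ⟩ ⟨hw, rfl⟩ (_ | a) ⟨q', γ'⟩ h
    · obtain ⟨hw', heq⟩ := hw.silent_step hG h
      exact ⟨_, .refl, hw', heq⟩
    · obtain ⟨hw', hstep⟩ := hw.visible_step hG h
      exact ⟨_, ⟨_, _, .refl, hstep, .refl⟩, hw', rfl⟩
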